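/- Let q₁,...,q_k be the output of the greedy farthest-point algorithm on P ⊂ ℝ^d, let H be a (k−1)-dimensional linear subspace with dist(q_i, H) ≤ x/k for all i, and let G = span{q₁,...,q_k}. Then for every p ∈ P, the projection p_G of p onto G satisfies dist(p_G, H) ≤ 2^{k−1} x. -/

import Mathlib

abbrev Pt (d : ℕ) := EuclideanSpace ℝ (Fin d)

def IsGreedy {d k : ℕ} (P : Set (Pt d)) (q : Fin k → Pt d) : Prop :=
  ∀ i : Fin k, q i ∈ P ∧ ∀ p ∈ P,
    Metric.infDist p (Submodule.span ℝ (q '' {j | j < i}) : Set (Pt d)) ≤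
      Metric.infDist (q i) (Submodule.span ℝ (q '' {j | j < i}) : Set (Pt d))

/-!
Write `V_t` for the span of the first `t` greedy points. Since `q_t` is a farthest point of `P`
from `V_t`, adding the direction `w = q_t - π_{V_t} q_t` changes the projection of any `p ∈ P` by
`c • w` with `|c| ≤ 1`. Expanding `w` with the representation of `π_{V_t} q_t` at most doubles the
coefficients, so `π_{V_k} p = ∑ α_j q_j` with `|α_j| ≤ 2^(k-1)`. Distance to `H` is a seminorm
(the quotient norm on `E ⧸ H`), whence `dist(π_{V_k} p, H) ≤ ∑ |α_j| dist(q_j, H) ≤ 2^(k-1) x`.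
-/

open Metric Submodule

section InnerProductSpace

variable {E : Type*} [NormedAddCommGroup E] [InnerProductSpace ℝ E]

theorem infDist_eq_norm_sub_starProjection (K : Submodule ℝ E) [K.HasOrthogonalProjection]
    (y : E) : infDist y K = ‖y - K.starProjection y‖ := by
  rw [infDist_eq_iInf, starProjection_minimal]
  simp_rw [dist_eq_norm]
  rfl

theorem starProjection_sup_span_singleton (V : Submodule ℝ E) [V.HasOrthogonalProjection]
    (v p : E) [(V ⊔ ℝ ∙ v).HasOrthogonalProjection] :
    (V ⊔ ℝ ∙ v).starProjection p =
      V.starProjection p + (ℝ ∙ (v - V.starProjection v)).starProjection p := by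
  set w := v - V.starProjection v
  have hwV : (ℝ ∙ w) ≤ Vᗮ :=
    (span_singleton_le_iff_mem _ _).2 (sub_starProjection_mem_orthogonal v)
  have hle : V ⊔ ℝ ∙ v ≤ V ⊔ ℝ ∙ w := by
    refine sup_le le_sup_left ((span_singleton_le_iff_mem _ _).2 ?_)
    rw [← sub_add_cancel v (V.starProjection v)]
    exact add_mem (mem_sup_right (mem_span_singleton_self w))
      (mem_sup_left (V.starProjection_apply_mem v))
  apply eq_starProjection_of_mem_orthogonal
  · refine add_mem (mem_sup_left (V.starProjection_apply_mem p)) ?_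
    refine (span_singleton_le_iff_mem _ _).2 (sub_mem ?_ ?_) (starProjection_apply_mem _ p)
    · exact mem_sup_right (mem_span_singleton_self v)
    · exact mem_sup_left (V.starProjection_apply_mem v)
  · refine orthogonal_le hle ?_
    rw [← inf_orthogonal]
    constructor
    · rw [← sub_sub]
      exact sub_mem (sub_starProjection_mem_orthogonal p) (hwV (starProjection_apply_mem _ p))
    · rw [sub_add_eq_sub_sub_swap]
      refine sub_mem (sub_starProjection_mem_orthogonal p) ?_
      exact (le_orthogonal_iff_le_orthogonal.1 hwV) (V.starProjection_apply_mem p)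

theorem exists_abs_le_one_starProjection_span_singleton_eq {w p : E}
    (h : |inner ℝ w p| ≤ ‖w‖ ^ 2) : ∃ c : ℝ, |c| ≤ 1 ∧ (ℝ ∙ w).starProjection p = c • w :=
  ⟨inner ℝ w p / ‖w‖ ^ 2, by rw [abs_div, abs_sq]; exact div_le_one_of_le₀ h (sq_nonneg _),
    by simpa using starProjection_singleton ℝ (v := w) p⟩

theorem exists_starProjection_sup_span_singleton_eq (V : Submodule ℝ E)
    [V.HasOrthogonalProjection] {v p : E} [(V ⊔ ℝ ∙ v).HasOrthogonalProjection]
    (h : infDist p V ≤ infDist v V) :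
    ∃ c : ℝ, |c| ≤ 1 ∧
      (V ⊔ ℝ ∙ v).starProjection p = V.starProjection p + c • (v - V.starProjection v) := by
  set w := v - V.starProjection v
  have hinner : |inner ℝ w p| ≤ ‖w‖ ^ 2 :=
    calc |inner ℝ w p| = |inner ℝ w (p - V.starProjection p)| := by
          rw [inner_sub_right, inner_left_of_mem_orthogonal (V.starProjection_apply_mem p)
            (sub_starProjection_mem_orthogonal v), sub_zero]
      _ ≤ ‖w‖ * ‖p - V.starProjection p‖ := abs_real_inner_le_norm _ _
      _ ≤ ‖w‖ * ‖w‖ := by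
          gcongr
          rwa [← infDist_eq_norm_sub_starProjection, ← infDist_eq_norm_sub_starProjection]
      _ = ‖w‖ ^ 2 := (sq _).symm
  obtain ⟨c, hc, hcw⟩ := exists_abs_le_one_starProjection_span_singleton_eq hinner
  exact ⟨c, hc, by rw [starProjection_sup_span_singleton, hcw]⟩

end InnerProductSpace

theorem infDist_sum_smul_le {E ι : Type*} [SeminormedAddCommGroup E] [NormedSpace ℝ E]
    (H : Submodule ℝ E) (s : Finset ι) (α : ι → ℝ) (v : ι → E) :
    infDist (∑ i ∈ s, α i • v i) H ≤ ∑ i ∈ s, |α i| * infDist (v i) H := by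
  have hnorm (y : E) : infDist y H = ‖H.mkQ y‖ :=
    (QuotientAddGroup.norm_mk (S := H.toAddSubgroup) y).symm
  calc infDist (∑ i ∈ s, α i • v i) H = ‖∑ i ∈ s, α i • H.mkQ (v i)‖ := by
        simp only [hnorm, map_sum, map_smul]
    _ ≤ ∑ i ∈ s, ‖α i • H.mkQ (v i)‖ := norm_sum_le _ _
    _ = ∑ i ∈ s, |α i| * infDist (v i) H := by simp only [norm_smul, hnorm, Real.norm_eq_abs]

theorem span_image_lt_succ {R M : Type*} [Semiring R] [AddCommMonoid M] [Module R M] {k : ℕ}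
    (q : Fin k → M) {t : ℕ} (ht : t < k) :
    span R (q '' {j : Fin k | (j : ℕ) < t + 1}) =
      span R (q '' {j : Fin k | (j : ℕ) < t}) ⊔ R ∙ q ⟨t, ht⟩ := by
  have hsplit : {j : Fin k | (j : ℕ) < t + 1} = {j : Fin k | (j : ℕ) < t} ∪ {⟨t, ht⟩} := by
    ext j
    simp only [Set.mem_ofPred_eq, Set.mem_union, Set.mem_singleton_iff, Fin.ext_iff]
    omega
  rw [hsplit, Set.image_union, Set.image_singleton, span_union]

theorem IsGreedy.exists_starProjection_eq_sum {d k : ℕ} {P : Set (Pt d)} {q : Fin k → Pt d}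
    (hg : IsGreedy P q) {t : ℕ} (ht : t ≤ k) {p : Pt d} (hp : p ∈ P) :
    ∃ α : Fin k → ℝ, (∀ j : Fin k, t ≤ (j : ℕ) → α j = 0) ∧ (∀ j, |α j| ≤ 2 ^ (t - 1)) ∧
      (span ℝ (q '' {j : Fin k | (j : ℕ) < t})).starProjection p = ∑ j, α j • q j := by
  induction t generalizing p with
  | zero => exact ⟨0, fun _ _ => rfl, fun _ => by simp, by simp⟩
  | succ t ih =>
    set i : Fin k := ⟨t, ht⟩
    set V := span ℝ (q '' {j : Fin k | (j : ℕ) < t})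
    have hfar : infDist p V ≤ infDist (q i) V := (hg i).2 p hp
    obtain ⟨α, hα0, hα, hαp⟩ := ih (by omega) hp
    obtain ⟨β, hβ0, hβ, hβq⟩ := ih (by omega) (hg i).1
    obtain ⟨c, hc, hstep⟩ := exists_starProjection_sup_span_singleton_eq V hfar
    refine ⟨α + c • (Pi.single i 1 - β), fun j hj => ?_, fun j => ?_, ?_⟩
    · have hji : j ≠ i := Fin.ne_of_val_ne (by simp only [i]; omega)
      simp [hα0 j (by omega), hβ0 j (by omega), hji]
    · by_cases hji : j = i
      · subst hji
        simpa [hα0 i le_rfl, hβ0 i le_rfl] using hc.trans (one_le_pow₀ one_le_two)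
      obtain hjt | hjt := lt_or_ge (j : ℕ) t
      · simp only [Pi.add_apply, Pi.smul_apply, Pi.sub_apply, Pi.single_eq_of_ne hji, smul_eq_mul]
        calc |α j + c * (0 - β j)| ≤ |α j| + |c| * |β j| := by
              rw [zero_sub, mul_neg, ← sub_eq_add_neg, ← abs_mul]; exact abs_sub _ _
          _ ≤ 2 ^ (t - 1) + 1 * 2 ^ (t - 1) := by gcongr; exacts [hα j, hβ j]
          _ = 2 ^ (t + 1 - 1) := by rw [one_mul, ← two_mul, ← pow_succ']; congr 1; omega
      · simp [hα0 j hjt, hβ0 j hjt, Pi.single_eq_of_ne hji]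
    · rw [span_image_lt_succ q ht, hstep, hαp, hβq]
      simp [add_smul, sub_smul, mul_smul, Finset.sum_add_distrib, ← Finset.smul_sum,
        Finset.sum_sub_distrib, Pi.single_apply]

theorem greedy_projection_dirHeight_general {d k : ℕ} (P : Set (Pt d)) (q : Fin k → Pt d)
    (hg : IsGreedy P q) (H : Submodule ℝ (Pt d))
    (x : ℝ) (hx : 0 < x)
    (hd : ∀ i, Metric.infDist (q i) (H : Set (Pt d)) ≤ x / k)
    (p : Pt d) (hp : p ∈ P) :
    Metric.infDist ((Submodule.orthogonalProjection (Submodule.span ℝ (Set.range q)) p : Pt d))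
      (H : Set (Pt d)) ≤ 2 ^ (k - 1) * x := by
  obtain ⟨α, -, hα, hrep⟩ := hg.exists_starProjection_eq_sum le_rfl hp
  have hall : q '' {j : Fin k | (j : ℕ) < k} = Set.range q := by simp
  -- `x / 0 = 0`, so for `k = 0` this is `0 ≤ x`
  have hkx : (k : ℝ) * (x / k) ≤ x := by
    obtain rfl | hk := k.eq_zero_or_pos
    · simpa using hx.le
    · rw [mul_div_cancel₀ _ (by positivity)]
  rw [← hall, ← starProjection_apply, hrep]
  calc infDist (∑ j, α j • q j) H ≤ ∑ j, |α j| * infDist (q j) H := infDist_sum_smul_le H _ α q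
    _ ≤ ∑ _j : Fin k, 2 ^ (k - 1) * (x / k) :=
        Finset.sum_le_sum fun j _ => mul_le_mul (hα j) (hd j) infDist_nonneg (by positivity)
    _ = 2 ^ (k - 1) * (k * (x / k)) := by simp [mul_left_comm]
    _ ≤ 2 ^ (k - 1) * x := by gcongr

/-- If `q` is the greedy output on `P`, `H` is a `(k-1)`-dimensional subspace with
`dist(q i, H) ≤ x/k` for all `i`, and `G = span{q 0, …, q (k-1)}`, then for every
`p ∈ P`, the projection `p_G` of `p` onto `G` satisfies `dist(p_G, H) ≤ 2^{k-1} x`. -/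
theorem greedy_projection_dirHeight {d k : ℕ} (P : Set (Pt d)) (q : Fin k → Pt d)
    (hg : IsGreedy P q) (H : Submodule ℝ (Pt d)) (hH : Module.finrank ℝ H = k - 1)
    (x : ℝ) (hx : 0 < x)
    (hd : ∀ i, Metric.infDist (q i) (H : Set (Pt d)) ≤ x / k)
    (p : Pt d) (hp : p ∈ P) :
    Metric.infDist ((Submodule.orthogonalProjection (Submodule.span ℝ (Set.range q)) p : Pt d))
      (H : Set (Pt d)) ≤ 2 ^ (k - 1) * x :=
  greedy_projection_dirHeight_general P q hg H x hx hd p hp
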